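/- Every traceless 2×2 complex matrix is a sum of three matrices each of whose square is zero. -/

import Mathlib

/-!
Writing a traceless `M` as `!![a, b; c, -a]`, the diagonal is carried by the square-zero matrix
`!![a, a; -a, -a]`, and what is left, `!![0, b - a; c + a, 0]`, splits into a strictly upper and a
strictly lower triangular matrix, both of which square to zero.
-/

namespace Matrix

variable {R : Type*} [NonUnitalNonAssocRing R]

theorem of_fin_two_upper_mul_self (b : R) : !![0, b; 0, 0] * !![0, b; 0, 0] = 0 := by
  ext i j; fin_cases i <;> fin_cases j <;> simp

theorem of_fin_two_lower_mul_self (c : R) : !![0, 0; c, 0] * !![0, 0; c, 0] = 0 := by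
  ext i j; fin_cases i <;> fin_cases j <;> simp

theorem of_fin_two_neg_neg_mul_self (a : R) : !![a, a; -a, -a] * !![a, a; -a, -a] = 0 := by
  ext i j; fin_cases i <;> fin_cases j <;> simp

theorem eq_of_fin_two_of_trace_eq_zero {M : Matrix (Fin 2) (Fin 2) R} (h : M.trace = 0) :
    M = !![M 0 0, M 0 1; M 1 0, -M 0 0] := by
  rw [trace_fin_two, add_eq_zero_iff_eq_neg'] at h
  rw [← h]
  exact eta_fin_two M

theorem exists_mul_self_eq_zero_add_add_of_trace_eq_zero {M : Matrix (Fin 2) (Fin 2) R}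
    (h : M.trace = 0) :
    ∃ A B C : Matrix (Fin 2) (Fin 2) R,
      A * A = 0 ∧ B * B = 0 ∧ C * C = 0 ∧ M = A + B + C := by
  rw [eq_of_fin_two_of_trace_eq_zero h]
  refine ⟨_, _, _, of_fin_two_neg_neg_mul_self (M 0 0), of_fin_two_upper_mul_self (M 0 1 - M 0 0),
    of_fin_two_lower_mul_self (M 1 0 + M 0 0), ?_⟩
  ext i j; fin_cases i <;> fin_cases j <;> simp

end Matrix

/-- Every traceless 2×2 complex matrix is a sum of three matrices each of whose
square is zero. -/
theorem stmt_8 (M : Matrix (Fin 2) (Fin 2) ℂ) (h : Matrix.trace M = 0) :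
    ∃ A B C : Matrix (Fin 2) (Fin 2) ℂ,
      A * A = 0 ∧ B * B = 0 ∧ C * C = 0 ∧ M = A + B + C :=
  Matrix.exists_mul_self_eq_zero_add_add_of_trace_eq_zero h
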